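/- arXiv:1308.2537 — 2 statements merged into one kernel-verified Lean document; each statement's English description precedes it below -/
import Mathlib

section
/- Let T be a rooted phylogenetic X-tree and L a topological lasso for T. Then for every vertex v of T, the subgraph Γ_v(L) of the cord graph Γ(L) induced by the leaf set L(v) is connected; in particular Γ(L) itself is connected. -/
open scoped Classical

/-- A rooted `X`-tree on vertex type `V`: a finite rooted tree encoded by a parent
function, whose leaves (the vertices with no children) are bijectively labelled by `X`. -/
structure XTree (X V : Type) where
  root : V
  parent : V → V
  parent_root : parent root = root
  reaches : ∀ v : V, ∃ n : ℕ, parent^[n] v = root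
  leaf : X → V
  leaf_inj : Function.Injective leaf
  leaf_iff : ∀ v : V, (∀ w : V, parent w = v → w = v) ↔ v ∈ Set.range leaf

namespace XTree

variable {X V : Type}

/-- The children of a vertex. -/
def children (T : XTree X V) (v : V) : Set V := {w | T.parent w = v ∧ w ≠ v}

def IsLeaf (T : XTree X V) (v : V) : Prop := v ∈ Set.range T.leaf

def Interior (T : XTree X V) (v : V) : Prop := ¬ T.IsLeaf v

/-- Phylogenetic: root has at least two children, and no non-root vertex has exactly
one child (no degree-two vertices apart from possibly the root). -/
def IsPhylo (T : XTree X V) : Prop :=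
  2 ≤ (T.children T.root).ncard ∧
    ∀ v : V, v ≠ T.root → T.Interior v → 2 ≤ (T.children v).ncard

/-- `T.Desc v w` : `w` is a descendant of `v` (or equal to `v`). -/
def Desc (T : XTree X V) (v w : V) : Prop := ∃ n : ℕ, T.parent^[n] w = v

/-- The set of leaf labels below a vertex. -/
def leafSet (T : XTree X V) (v : V) : Set X := {x | T.Desc v (T.leaf x)}

/-- `v` is the last common ancestor of the set `S` of vertices. -/
def IsLCA (T : XTree X V) (v : V) (S : Set V) : Prop :=
  (∀ w ∈ S, T.Desc v w) ∧ ∀ u : V, (∀ w ∈ S, T.Desc u w) → T.Desc u v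

/-- Not a star tree: some interior vertex other than the root. -/
def NonDegenerate (T : XTree X V) : Prop := ∃ v : V, T.Interior v ∧ v ≠ T.root

end XTree

/-- A cord: a 2-element subset of `X`. -/
def IsCord {X : Type} (c : Set X) : Prop := ∃ a b : X, a ≠ b ∧ c = {a, b}

/-- The graph `Γ(L)` with vertex set `X` and edge set `L`. -/
def cordGraph {X : Type} (L : Set (Set X)) : SimpleGraph X where
  Adj a b := a ≠ b ∧ ({a, b} : Set X) ∈ L
  symm := by
    constructor
    intro a b h
    exact ⟨Ne.symm h.1, by rw [Set.pair_comm]; exact h.2⟩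
  loopless := by constructor; intro a h; exact h.1 rfl

/-- Topological lasso, via the child-edge graph characterization: for every interior
vertex, any two distinct child subtrees are joined by a cord of `L`. -/
def XTree.IsTopoLasso {X V : Type} (T : XTree X V) (L : Set (Set X)) : Prop :=
  ∀ v c₁ c₂ : V, c₁ ∈ T.children v → c₂ ∈ T.children v → c₁ ≠ c₂ →
    ∃ a b : X, a ∈ T.leafSet c₁ ∧ b ∈ T.leafSet c₂ ∧ ({a, b} : Set X) ∈ L

/-- Set-inclusion minimal topological lasso. -/
def XTree.IsMinTopoLasso {X V : Type} (T : XTree X V) (L : Set (Set X)) : Prop :=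
  T.IsTopoLasso L ∧ ∀ L' ⊆ L, T.IsTopoLasso L' → L' = L

/-- A nonempty vertex set inducing a connected subgraph with no cut vertex. -/
def GoodSet {α : Type} (G : SimpleGraph α) (B : Set α) : Prop :=
  B.Nonempty ∧ (G.induce B).Connected ∧
    ∀ v ∈ B, (B \ {v}).Nonempty → (G.induce (B \ {v})).Connected

/-- A block: a maximal connected induced subgraph without a cut vertex. -/
def IsBlock {α : Type} (G : SimpleGraph α) (B : Set α) : Prop :=
  GoodSet G B ∧ ∀ C : Set α, GoodSet G C → B ⊆ C → B = C

/-- A block graph: every block is a clique. -/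
def IsBlockGraph {α : Type} (G : SimpleGraph α) : Prop :=
  ∀ B : Set α, IsBlock G B → G.IsClique B

/-- A cut vertex: deleting it disconnects the graph. -/
def IsCutVtx {α : Type} (G : SimpleGraph α) (v : α) : Prop :=
  ¬ (G.induce {w | w ≠ v}).Connected

/-- Claw-free: no induced `K_{1,3}`. -/
def ClawFree {α : Type} (G : SimpleGraph α) : Prop :=
  ¬ ∃ v a b c : α, a ≠ b ∧ a ≠ c ∧ b ≠ c ∧
    G.Adj v a ∧ G.Adj v b ∧ G.Adj v c ∧ ¬ G.Adj a b ∧ ¬ G.Adj a c ∧ ¬ G.Adj b c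

/-- The child-edge graph `G(L,v)`: vertices are the children of `v` (equivalently
the child edges of `v`), two of them adjacent if a cord of `L` joins their subtrees. -/
def childGraph {X V : Type} (T : XTree X V) (L : Set (Set X)) (v : V) :
    SimpleGraph {c : V // c ∈ T.children v} where
  Adj c₁ c₂ := c₁ ≠ c₂ ∧ ∃ a b : X,
    a ∈ T.leafSet (c₁ : V) ∧ b ∈ T.leafSet (c₂ : V) ∧ ({a, b} : Set X) ∈ L
  symm := by
    constructor
    rintro c₁ c₂ ⟨h, a, b, ha, hb, hm⟩
    exact ⟨Ne.symm h, b, a, hb, ha, by rw [Set.pair_comm]; exact hm⟩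
  loopless := by constructor; rintro c ⟨h, -⟩; exact h rfl

/-- `cl(T)`: the clusters of non-root interior vertices. -/
def clSet {X V : Type} (T : XTree X V) : Set (Set X) :=
  {A | ∃ v : V, v ≠ T.root ∧ T.Interior v ∧ A = T.leafSet v}

/-- A cluster marker map for `T` and the ordering of `X`:
`f A` is the `σ`-least element of `A` not used as marker of a proper subcluster. -/
def IsClusterMarker {X V : Type} [LinearOrder X] (T : XTree X V) (f : Set X → X) : Prop :=
  ∀ A ∈ clSet T,
    ((∃ B ∈ clSet T, B ⊂ A) →
      IsLeast (A \ {y | ∃ B ∈ clSet T, B ⊂ A ∧ f B = y}) (f A)) ∧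
    ((¬ ∃ B ∈ clSet T, B ⊂ A) → IsLeast A (f A))

/-- The marker of a child `c` of an interior vertex: the label of `c` if `c` is a leaf,
and `f (L(c))` if `c` is interior. -/
def markRel {X V : Type} (T : XTree X V) (f : Set X → X) (c : V) (a : X) : Prop :=
  T.leaf a = c ∨ (T.Interior c ∧ a = f (T.leafSet c))

/-- `L_{(T,f)}(v)`: all cords between markers of distinct children of `v`. -/
def lassoAt {X V : Type} (T : XTree X V) (f : Set X → X) (v : V) : Set (Set X) :=
  {c | ∃ c₁ c₂ : V, c₁ ∈ T.children v ∧ c₂ ∈ T.children v ∧ c₁ ≠ c₂ ∧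
    ∃ a b : X, markRel T f c₁ a ∧ markRel T f c₂ b ∧ c = {a, b}}

/-- `L_{(T,f)}`: the union over all interior vertices of `L_{(T,f)}(v)`. -/
def lassoFull {X V : Type} (T : XTree X V) (f : Set X → X) : Set (Set X) :=
  {c | ∃ v : V, T.Interior v ∧ c ∈ lassoAt T f v}

/-- An equidistant proper edge-weighting of `T`, encoded by the height function
`t v` = distance from `v` to any leaf below it (so all leaves are equidistant
from the root); properness: interior edges have positive weight. -/
def EquidistantProper {X V : Type} (T : XTree X V) (t : V → ℝ) : Prop :=
  (∀ x : X, t (T.leaf x) = 0) ∧ (∀ v : V, t v ≤ t (T.parent v)) ∧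
    ∀ v : V, v ≠ T.root → T.Interior v → t v < t (T.parent v)

/-- Equivalence of two `X`-trees: a root-, parent- and labelling-preserving bijection. -/
def TreeEquiv {X V V' : Type} (T : XTree X V) (T' : XTree X V') : Prop :=
  ∃ φ : V ≃ V', φ T.root = T'.root ∧ (∀ v, φ (T.parent v) = T'.parent (φ v)) ∧
    ∀ x, φ (T.leaf x) = T'.leaf x

/-- `S` is (equivalent to) the restriction `T|_Y`: the clusters of `S` are exactly the
nonempty traces on `Y` of the clusters of `T`. -/
def IsRestriction {X : Type} (Y : Set X) {V W : Type}
    (T : XTree X V) (S : XTree (↥Y) W) : Prop :=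
  ∀ A : Set X, A ⊆ Y →
    ((∃ w : W, A = Subtype.val '' S.leafSet w) ↔ (A.Nonempty ∧ ∃ v : V, A = T.leafSet v ∩ Y))

/-- The restriction `L|_Y` of a set of cords of `X` to cords of `Y`. -/
def restrictLasso {X : Type} (Y : Set X) (L : Set (Set X)) : Set (Set ↥Y) :=
  {c | ∃ a b : ↥Y, a ≠ b ∧ c = {a, b} ∧ ({(a : X), (b : X)} : Set X) ∈ L}

/-!
A leaf set `L(v)` is the union of the leaf sets of the children of `v`. Inductively each of
these induces a connected subgraph of `Γ(L)`, and the lasso condition at `v` supplies an edge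
of `Γ(L)` between any two of them, so their union is connected as well. At the root, `L(v)` is
all of `X`.
-/

namespace SimpleGraph

variable {α ι : Type*} {G : SimpleGraph α}

lemma induce_iUnion_connected_of_pairwise_adj [Nonempty ι] {A : ι → Set α}
    (hconn : ∀ i, (G.induce (A i)).Connected)
    (hadj : Pairwise fun i j => ∃ a ∈ A i, ∃ b ∈ A j, G.Adj a b) :
    (G.induce (⋃ i, A i)).Connected := by
  obtain ⟨i⟩ := ‹Nonempty ι›
  obtain ⟨u, hu⟩ := (hconn i).nonempty
  refine G.induce_connected_of_patches u (Set.mem_iUnion_of_mem i hu) fun {v} hv => ?_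
  obtain ⟨j, hvj⟩ := Set.mem_iUnion.mp hv
  by_cases hij : i = j
  · subst hij
    exact ⟨A i, Set.subset_iUnion A i, hu, hvj, (hconn i).preconnected ⟨u, hu⟩ ⟨v, hvj⟩⟩
  · obtain ⟨a, ha, b, hb, hab⟩ := hadj hij
    refine ⟨A i ∪ A j, Set.union_subset (Set.subset_iUnion A i) (Set.subset_iUnion A j),
      Or.inl hu, Or.inr hvj, ?_⟩
    exact (G.connected_induce_union (hconn i).preconnected (hconn j).preconnected ha hb hab)
      |>.preconnected _ _

end SimpleGraph

lemma cordGraph_adj_of_mem {X : Type} {L : Set (Set X)} (hL : ∀ c ∈ L, IsCord c) {a b : X}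
    (hab : ({a, b} : Set X) ∈ L) : (cordGraph L).Adj a b := by
  refine ⟨?_, hab⟩
  rintro rfl
  obtain ⟨p, q, hpq, hcord⟩ := hL _ hab
  rw [Set.pair_eq_singleton] at hcord
  have hp : p = a := by simpa using hcord.symm.subset (Set.mem_insert p {q})
  have hq : q = a := by simpa using hcord.symm.subset (Set.mem_insert_of_mem p rfl)
  exact hpq (hp.trans hq.symm)

namespace XTree

variable {X V : Type} (T : XTree X V)

noncomputable def depth (v : V) : ℕ := Nat.find (T.reaches v)

lemma depth_lt_depth_of_mem_children {v c : V} (hc : c ∈ T.children v) :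
    T.depth v < T.depth c := by
  obtain ⟨hcv, hne⟩ := hc
  have hroot : T.parent^[T.depth c] c = T.root := Nat.find_spec (T.reaches c)
  cases hk : T.depth c with
  | zero =>
    rw [hk, Function.iterate_zero_apply] at hroot
    subst hroot
    exact absurd (hcv.symm.trans T.parent_root) (Ne.symm hne)
  | succ k =>
    rw [hk, Function.iterate_succ_apply, hcv] at hroot
    exact Nat.lt_succ_of_le (Nat.find_min' _ hroot)

lemma wellFounded_children [Finite V] : WellFounded fun c v => c ∈ T.children v :=
  Subrelation.wf (T.depth_lt_depth_of_mem_children ·)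
    (Finite.wellFounded_of_trans_of_irrefl (InvImage (· > ·) T.depth))

lemma children_nonempty {v : V} (hv : T.Interior v) : (T.children v).Nonempty := by
  by_contra h
  refine hv ((T.leaf_iff v).mp fun w hw => ?_)
  by_contra hwv
  exact h ⟨w, hw, hwv⟩

lemma eq_leaf_of_parent_iterate_eq_leaf (x : X) {w : V} {n : ℕ}
    (h : T.parent^[n] w = T.leaf x) : w = T.leaf x := by
  induction n with
  | zero => exact h
  | succ n ih =>
    rw [Function.iterate_succ_apply'] at h
    exact ih ((T.leaf_iff _).mpr ⟨x, rfl⟩ _ h)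

lemma leafSet_leaf (x : X) : T.leafSet (T.leaf x) = {x} := by
  ext y
  constructor
  · rintro ⟨n, hn⟩
    exact T.leaf_inj (T.eq_leaf_of_parent_iterate_eq_leaf x hn)
  · rintro rfl
    exact ⟨0, rfl⟩

lemma leafSet_subset_of_mem_children {v c : V} (hc : c ∈ T.children v) :
    T.leafSet c ⊆ T.leafSet v := by
  rintro x ⟨n, hn⟩
  exact ⟨n + 1, by rw [Function.iterate_succ_apply', hn, hc.1]⟩

lemma exists_mem_children_of_mem_leafSet {v : V} (hv : T.Interior v) {x : X}
    (hx : x ∈ T.leafSet v) : ∃ c ∈ T.children v, x ∈ T.leafSet c := by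
  have hn := Nat.find_spec hx
  cases hk : Nat.find hx with
  | zero =>
    rw [hk, Function.iterate_zero_apply] at hn
    exact absurd ⟨x, hn⟩ hv
  | succ k =>
    rw [hk, Function.iterate_succ_apply'] at hn
    refine ⟨T.parent^[k] (T.leaf x), ⟨hn, fun h => ?_⟩, k, rfl⟩
    exact Nat.find_min hx (hk ▸ Nat.lt_succ_self k) h

lemma leafSet_eq_iUnion_children {v : V} (hv : T.Interior v) :
    T.leafSet v = ⋃ c : T.children v, T.leafSet c := by
  refine Set.Subset.antisymm (fun x hx => ?_) (Set.iUnion_subset fun c =>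
    T.leafSet_subset_of_mem_children c.2)
  obtain ⟨c, hc, hxc⟩ := T.exists_mem_children_of_mem_leafSet hv hx
  exact Set.mem_iUnion.mpr ⟨⟨c, hc⟩, hxc⟩

lemma leafSet_root : T.leafSet T.root = Set.univ :=
  Set.eq_univ_of_forall fun x => T.reaches (T.leaf x)

lemma induce_leafSet_connected [Finite V] {L : Set (Set X)} (hL : ∀ c ∈ L, IsCord c)
    (hlasso : T.IsTopoLasso L) (v : V) : ((cordGraph L).induce (T.leafSet v)).Connected := by
  induction v using T.wellFounded_children.induction with | _ v ih
  by_cases hv : T.IsLeaf v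
  · obtain ⟨x, rfl⟩ := hv
    rw [T.leafSet_leaf, SimpleGraph.induce_singleton_eq_top]
    exact SimpleGraph.connected_top
  · have := (T.children_nonempty hv).to_subtype
    rw [T.leafSet_eq_iUnion_children hv]
    refine SimpleGraph.induce_iUnion_connected_of_pairwise_adj (fun c => ih c c.2)
      fun c₁ c₂ hne => ?_
    obtain ⟨a, b, ha, hb, hab⟩ := hlasso v c₁ c₂ c₁.2 c₂.2 (Subtype.coe_injective.ne hne)
    exact ⟨a, ha, b, hb, cordGraph_adj_of_mem hL hab⟩

end XTree

theorem stmt10_general {X V : Type} [Fintype V] (T : XTree X V)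
    (L : Set (Set X)) (hc : ∀ c ∈ L, IsCord c)
    (hlasso : T.IsTopoLasso L) :
    (∀ v : V, ((cordGraph L).induce (T.leafSet v)).Connected) ∧
      (cordGraph L).Connected := by
  have hleafSet := T.induce_leafSet_connected hc hlasso
  refine ⟨hleafSet, ?_⟩
  have hroot := hleafSet T.root
  rw [T.leafSet_root] at hroot
  exact (SimpleGraph.induceUnivIso _).connected_iff.mp hroot

/-- if `L` is a topological lasso for `T`, then for every vertex `v` the
subgraph of `Γ(L)` induced by `L(v)` is connected; in particular `Γ(L)` is connected. -/
theorem stmt10 {X V : Type} [Fintype X] [Fintype V] (T : XTree X V)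
    (hph : T.IsPhylo) (hX : 3 ≤ Fintype.card X)
    (L : Set (Set X)) (hc : ∀ c ∈ L, IsCord c) (hcov : ∀ x : X, ∃ c ∈ L, x ∈ c)
    (hlasso : T.IsTopoLasso L) :
    (∀ v : V, ((cordGraph L).induce (T.leafSet v)).Connected) ∧
      (cordGraph L).Connected :=
  stmt10_general T L hc hlasso
end

section
/- Let T be a non-degenerate rooted phylogenetic X-tree, σ a total order on X, and f: cl(T) → X a cluster marker map for T and σ. Then the set L_{(T,f)} is a topological lasso for T; moreover it is a minimal topological lasso for T. -/
open scoped Classical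

/-! A cord of `L_{(T,f)}(v)` joins the markers of two children of `v`, and a marker lies in
the cluster it marks, so `L_{(T,f)}` joins the subtrees of any two siblings: it is a
topological lasso. Conversely, if the two ends of a cord of `L_{(T,f)}` lie below distinct
siblings `c₁, c₂`, then the cord was contributed by their parent and joins the markers of
`c₁` and `c₂`. So every topological lasso inside `L_{(T,f)}` contains each of its cords. -/

namespace XTree

variable {X V : Type} (T : XTree X V)

lemma parent_iterate_root (n : ℕ) : T.parent^[n] T.root = T.root :=
  Function.iterate_fixed T.parent_root n

variable {T}

lemma eq_root_of_isPeriodicPt {v : V} {k : ℕ} (hk : 0 < k)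
    (h : Function.IsPeriodicPt T.parent k v) : v = T.root := by
  obtain ⟨N, hN⟩ := T.reaches v
  calc v = T.parent^[k * N] v := ((h.mul_const N).eq).symm
    _ = T.parent^[k * N - N] (T.parent^[N] v) := by
      rw [← Function.iterate_add_apply, Nat.sub_add_cancel (Nat.le_mul_of_pos_left N hk)]
    _ = T.root := by rw [hN, parent_iterate_root]

lemma Desc.trans {u v w : V} (h₁ : T.Desc u v) (h₂ : T.Desc v w) : T.Desc u w := by
  obtain ⟨n, rfl⟩ := h₁
  obtain ⟨m, rfl⟩ := h₂
  exact ⟨n + m, Function.iterate_add_apply _ _ _ _⟩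

lemma Desc.antisymm {u v : V} (h₁ : T.Desc u v) (h₂ : T.Desc v u) : u = v := by
  obtain ⟨n, hn⟩ := h₁
  obtain ⟨m, hm⟩ := h₂
  rcases Nat.eq_zero_or_pos n with rfl | hpos
  · exact hn.symm
  · have hv : Function.IsPeriodicPt T.parent (m + n) v := by
      rw [Function.IsPeriodicPt, Function.IsFixedPt, Function.iterate_add_apply, hn, hm]
    rw [← hn, eq_root_of_isPeriodicPt (by omega) hv, parent_iterate_root]

lemma Desc.total_of_desc {u v w : V} (h₁ : T.Desc u w) (h₂ : T.Desc v w) :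
    T.Desc u v ∨ T.Desc v u := by
  obtain ⟨n, rfl⟩ := h₁
  obtain ⟨m, rfl⟩ := h₂
  rcases le_total n m with h | h
  · exact Or.inr ⟨m - n, by rw [← Function.iterate_add_apply, Nat.sub_add_cancel h]⟩
  · exact Or.inl ⟨n - m, by rw [← Function.iterate_add_apply, Nat.sub_add_cancel h]⟩

lemma Desc.parent_of_ne {u w : V} (h : T.Desc u w) (hne : u ≠ w) : T.Desc u (T.parent w) := by
  obtain ⟨_ | n, hn⟩ := h
  · exact absurd hn.symm hne
  · exact ⟨n, hn⟩

lemma ne_root_of_mem_children {v c : V} (h : c ∈ T.children v) : c ≠ T.root := by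
  rintro rfl
  exact h.2 (T.parent_root.symm.trans h.1)

lemma interior_of_mem_children {v c : V} (h : c ∈ T.children v) : T.Interior v :=
  fun hv => h.2 ((T.leaf_iff v).mpr hv c h.1)

lemma desc_of_mem_children {v c : V} (h : c ∈ T.children v) : T.Desc v c :=
  ⟨1, h.1⟩

lemma leafSet_mono {u v : V} (h : T.Desc u v) : T.leafSet v ⊆ T.leafSet u :=
  fun _ hx => h.trans hx

lemma desc_parent_of_strict_desc_child {v c d : V} (hc : c ∈ T.children v) (h : T.Desc d c)
    (hne : d ≠ c) : T.Desc d v :=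
  hc.1 ▸ h.parent_of_ne hne

lemma eq_of_mem_children_of_desc {v c₁ c₂ : V} (hc₁ : c₁ ∈ T.children v)
    (hc₂ : c₂ ∈ T.children v) (h : T.Desc c₁ c₂) : c₁ = c₂ := by
  by_contra hne
  exact hc₁.2 ((desc_parent_of_strict_desc_child hc₂ h hne).antisymm (desc_of_mem_children hc₁))

lemma eq_of_mem_leafSet_children {v c₁ c₂ : V} (hc₁ : c₁ ∈ T.children v)
    (hc₂ : c₂ ∈ T.children v) {x : X} (hx₁ : x ∈ T.leafSet c₁) (hx₂ : x ∈ T.leafSet c₂) :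
    c₁ = c₂ := by
  rcases Desc.total_of_desc hx₁ hx₂ with h | h
  · exact eq_of_mem_children_of_desc hc₁ hc₂ h
  · exact (eq_of_mem_children_of_desc hc₂ hc₁ h).symm

lemma eq_of_mem_leafSet_distinct_children {v u c₁ c₂ d₁ d₂ : V} (hc₁ : c₁ ∈ T.children v)
    (hc₂ : c₂ ∈ T.children v) (hc : c₁ ≠ c₂) (hd₁ : d₁ ∈ T.children u)
    (hd₂ : d₂ ∈ T.children u) (hd : d₁ ≠ d₂) {a b : X}
    (ha : a ∈ T.leafSet c₁ ∩ T.leafSet d₁) (hb : b ∈ T.leafSet c₂ ∩ T.leafSet d₂) :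
    c₁ = d₁ ∧ c₂ = d₂ := by
  have hcd₁ : c₁ = d₁ := by
    by_contra hne
    rcases Desc.total_of_desc ha.1 ha.2 with h | h
    · have hcu := desc_parent_of_strict_desc_child hd₁ h hne
      exact hc (eq_of_mem_leafSet_children hc₁ hc₂
        (leafSet_mono (hcu.trans (desc_of_mem_children hd₂)) hb.2) hb.1)
    · have hdv := desc_parent_of_strict_desc_child hc₁ h (Ne.symm hne)
      exact hd (eq_of_mem_leafSet_children hd₁ hd₂
        (leafSet_mono (hdv.trans (desc_of_mem_children hc₂)) hb.1) hb.2)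
  subst hcd₁
  have huv : u = v := hd₁.1.symm.trans hc₁.1
  subst huv
  exact ⟨rfl, eq_of_mem_leafSet_children hc₂ hd₂ hb.1 hb.2⟩

end XTree

open XTree

section Markers

variable {X V : Type} {T : XTree X V} {f : Set X → X}

lemma IsClusterMarker.mem [LinearOrder X] (hf : IsClusterMarker T f) {A : Set X}
    (hA : A ∈ clSet T) : f A ∈ A := by
  by_cases hsub : ∃ B ∈ clSet T, B ⊂ A
  · exact ((hf A hA).1 hsub).1.1
  · exact ((hf A hA).2 hsub).1

lemma markRel_exists (f : Set X → X) (c : V) : ∃ a, markRel T f c a := by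
  by_cases hc : T.IsLeaf c
  · obtain ⟨a, ha⟩ := hc
    exact ⟨a, Or.inl ha⟩
  · exact ⟨_, Or.inr ⟨hc, rfl⟩⟩

lemma markRel_unique {c : V} {a b : X} (ha : markRel T f c a) (hb : markRel T f c b) :
    a = b := by
  rcases ha with ha | ⟨hc, rfl⟩ <;> rcases hb with hb | ⟨hc', rfl⟩
  · exact T.leaf_inj (ha.trans hb.symm)
  · exact absurd ⟨a, ha⟩ hc'
  · exact absurd ⟨b, hb⟩ hc
  · rfl

lemma mem_leafSet_of_markRel [LinearOrder X] (hf : IsClusterMarker T f) {c : V}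
    (hc : c ≠ T.root) {a : X} (h : markRel T f c a) : a ∈ T.leafSet c := by
  rcases h with h | ⟨hint, rfl⟩
  · exact ⟨0, h⟩
  · exact hf.mem ⟨c, hc, hint, rfl⟩

lemma isTopoLasso_lassoFull [LinearOrder X] (hf : IsClusterMarker T f) :
    T.IsTopoLasso (lassoFull T f) := by
  intro v c₁ c₂ hc₁ hc₂ hc
  obtain ⟨a, ha⟩ := markRel_exists f c₁
  obtain ⟨b, hb⟩ := markRel_exists f c₂
  exact ⟨a, b, mem_leafSet_of_markRel hf (ne_root_of_mem_children hc₁) ha,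
    mem_leafSet_of_markRel hf (ne_root_of_mem_children hc₂) hb,
    v, interior_of_mem_children hc₁, c₁, c₂, hc₁, hc₂, hc, a, b, ha, hb, rfl⟩

lemma eq_markers_of_mem_lassoFull [LinearOrder X] (hf : IsClusterMarker T f)
    {v c₁ c₂ : V} (hc₁ : c₁ ∈ T.children v) (hc₂ : c₂ ∈ T.children v) (hc : c₁ ≠ c₂)
    {a b a' b' : X} (ha : markRel T f c₁ a) (hb : markRel T f c₂ b)
    (ha' : a' ∈ T.leafSet c₁) (hb' : b' ∈ T.leafSet c₂) (hmem : {a', b'} ∈ lassoFull T f) :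
    a' = a ∧ b' = b := by
  obtain ⟨u, -, d₁, d₂, hd₁, hd₂, hd, α, β, hα, hβ, hcord⟩ := hmem
  have hαd := mem_leafSet_of_markRel hf (ne_root_of_mem_children hd₁) hα
  have hβd := mem_leafSet_of_markRel hf (ne_root_of_mem_children hd₂) hβ
  rcases Set.pair_eq_pair_iff.mp hcord with ⟨rfl, rfl⟩ | ⟨rfl, rfl⟩
  · obtain ⟨rfl, rfl⟩ :=
      eq_of_mem_leafSet_distinct_children hc₁ hc₂ hc hd₁ hd₂ hd ⟨ha', hαd⟩ ⟨hb', hβd⟩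
    exact ⟨markRel_unique hα ha, markRel_unique hβ hb⟩
  · obtain ⟨rfl, rfl⟩ :=
      eq_of_mem_leafSet_distinct_children hc₁ hc₂ hc hd₂ hd₁ hd.symm ⟨ha', hβd⟩ ⟨hb', hαd⟩
    exact ⟨markRel_unique hβ ha, markRel_unique hα hb⟩

lemma lassoFull_subset_of_isTopoLasso [LinearOrder X] (hf : IsClusterMarker T f)
    {L : Set (Set X)} (hL : L ⊆ lassoFull T f) (hlasso : T.IsTopoLasso L) :
    lassoFull T f ⊆ L := by
  rintro _ ⟨v, -, c₁, c₂, hc₁, hc₂, hc, a, b, ha, hb, rfl⟩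
  obtain ⟨a', b', ha', hb', hmem⟩ := hlasso v c₁ c₂ hc₁ hc₂ hc
  obtain ⟨rfl, rfl⟩ := eq_markers_of_mem_lassoFull hf hc₁ hc₂ hc ha hb ha' hb' (hL hmem)
  exact hmem

end Markers

theorem stmt15_general {X V : Type} [LinearOrder X] (T : XTree X V)
    (f : Set X → X) (hf : IsClusterMarker T f) :
    T.IsTopoLasso (lassoFull T f) ∧ T.IsMinTopoLasso (lassoFull T f) := by
  have hlasso := isTopoLasso_lassoFull hf
  exact ⟨hlasso, hlasso, fun L hL hL' => hL.antisymm (lassoFull_subset_of_isTopoLasso hf hL hL')⟩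

/-- for a non-degenerate X-tree `T`, a total order `σ` on `X` and a
cluster marker map `f`, the set `L_{(T,f)}` is a (minimal) topological lasso for `T`. -/
theorem stmt15 {X V : Type} [Fintype X] [Fintype V] [LinearOrder X] (T : XTree X V)
    (hph : T.IsPhylo) (hX : 3 ≤ Fintype.card X) (hnd : T.NonDegenerate)
    (f : Set X → X) (hf : IsClusterMarker T f) :
    T.IsTopoLasso (lassoFull T f) ∧ T.IsMinTopoLasso (lassoFull T f) :=
  stmt15_general T f hf
end
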